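/- For all natural numbers n, m with n > m ≥ 0, the second-order Eulerian numbers satisfy E₂(n,m) = ∑_{k=0}^{m} C(2n+1, k) · S(n+m+1-k, m+1-k) · (-1)^k. -/

import Mathlib

/-! Both `S(n + m + 1, m + 1)` and `∑ⱼ E₂(n, j) C(m + 2n - j, 2n)` satisfy the recurrence of `S` in
the coordinates `(n, m)`, so they agree for all `n, m`. In generating-function form this says that
`∑ₘ S(n + m + 1, m + 1) xᵐ` is the second-order Eulerian polynomial `∑ⱼ E₂(n, j) xʲ` divided by
`(1 - x) ^ (2n + 1)`; multiplying back by `(1 - x) ^ (2n + 1)` and reading off the coefficient of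
`xᵐ` gives the identity. -/

/-- Unsigned Stirling numbers of the first kind. -/
def stirling1 : ℕ → ℕ → ℕ
  | 0, 0 => 1
  | 0, _ + 1 => 0
  | _ + 1, 0 => 0
  | n + 1, k + 1 => n * stirling1 n (k + 1) + stirling1 n k

/-- Stirling numbers of the second kind. -/
def stirling2 : ℕ → ℕ → ℕ
  | 0, 0 => 1
  | 0, _ + 1 => 0
  | _ + 1, 0 => 0
  | n + 1, k + 1 => (k + 1) * stirling2 n (k + 1) + stirling2 n k

/-- First-order Eulerian numbers. -/
def eulerian : ℕ → ℕ → ℕ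
  | 0, 0 => 1
  | 0, _ + 1 => 0
  | n + 1, 0 => eulerian n 0
  | n + 1, m + 1 => (m + 2) * eulerian n (m + 1) + (n - m) * eulerian n m

/-- Second-order Eulerian numbers. -/
def eulerian2 : ℕ → ℕ → ℕ
  | 0, 0 => 1
  | 0, _ + 1 => 0
  | n + 1, 0 => eulerian2 n 0
  | n + 1, m + 1 => (m + 2) * eulerian2 n (m + 1) + (2 * n - m) * eulerian2 n m

open Finset hiding mk

lemma stirling2_succ_succ (n k : ℕ) :
    stirling2 (n + 1) (k + 1) = (k + 1) * stirling2 n (k + 1) + stirling2 n k := rfl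

lemma stirling2_eq_zero_of_lt : ∀ {n k : ℕ}, n < k → stirling2 n k = 0
  | 0, _ + 1, _ => rfl
  | n + 1, k + 1, h => by
    rw [stirling2_succ_succ, stirling2_eq_zero_of_lt (by omega), stirling2_eq_zero_of_lt (by omega),
      mul_zero]

lemma stirling2_self : ∀ n : ℕ, stirling2 n n = 1
  | 0 => rfl
  | n + 1 => by
    rw [stirling2_succ_succ, stirling2_eq_zero_of_lt (by omega), stirling2_self n, mul_zero, zero_add]

lemma stirling2_succ_one : ∀ n : ℕ, stirling2 (n + 1) 1 = 1
  | 0 => rfl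
  | n + 1 => by rw [stirling2_succ_succ, stirling2_succ_one n]; rfl

lemma eulerian2_zero_right : ∀ n : ℕ, eulerian2 n 0 = 1
  | 0 => rfl
  | n + 1 => eulerian2_zero_right n

lemma eulerian2_eq_zero_of_lt : ∀ {n m : ℕ}, n < m → eulerian2 n m = 0
  | 0, _ + 1, _ => rfl
  | n + 1, m + 1, h => by
    rw [eulerian2, eulerian2_eq_zero_of_lt (by omega), eulerian2_eq_zero_of_lt (by omega)]
    simp

lemma sum_eulerian2_succ_mul (n : ℕ) (a : ℕ → ℕ) :
    ∑ j ∈ range (n + 2), eulerian2 (n + 1) j * a j =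
      ∑ j ∈ range (n + 1), eulerian2 n j * ((j + 1) * a j + (2 * n - j) * a (j + 1)) := by
  have hshift : ∑ j ∈ range (n + 1), (j + 1) * eulerian2 n j * a j =
      ∑ j ∈ range (n + 1), (j + 2) * eulerian2 n (j + 1) * a (j + 1) + eulerian2 n 0 * a 0 := by
    calc ∑ j ∈ range (n + 1), (j + 1) * eulerian2 n j * a j
        = ∑ j ∈ range (n + 2), (j + 1) * eulerian2 n j * a j := by
          rw [sum_range_succ _ (n + 1), eulerian2_eq_zero_of_lt (Nat.lt_succ_self n)]
          simp
      _ = _ := by rw [sum_range_succ']; simp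
  have hsplit : ∑ j ∈ range (n + 1), eulerian2 n j * ((j + 1) * a j + (2 * n - j) * a (j + 1)) =
      ∑ j ∈ range (n + 1), (j + 1) * eulerian2 n j * a j +
        ∑ j ∈ range (n + 1), (2 * n - j) * eulerian2 n j * a (j + 1) := by
    rw [← sum_add_distrib]
    exact sum_congr rfl fun j _ => by ring
  rw [hsplit, hshift, add_right_comm, ← sum_add_distrib, sum_range_succ']
  congr 1
  exact sum_congr rfl fun j _ => by simp only [eulerian2]; ring

lemma choose_pascal_combination {q r j : ℕ} (hj : j ≤ r) :
    (j + 1) * (q + r + 1 - j).choose (r + 1) + (r - j) * (q + r - j).choose (r + 1) =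
      (q + 1) * (q + r - j).choose r := by
  rcases le_or_gt j q with hjq | hqj
  · obtain ⟨p, rfl⟩ : ∃ p, q = j + p := ⟨q - j, by omega⟩
    have hpascal := Nat.choose_succ_succ' (p + r) r
    have hright := Nat.choose_succ_right_eq (p + r) r
    rw [show j + p + r + 1 - j = p + r + 1 by omega, show j + p + r - j = p + r by omega, hpascal]
    rw [show p + r - r = p by omega] at hright
    have hjr : r - j + (j + 1) = r + 1 := by omega
    calc (j + 1) * ((p + r).choose r + (p + r).choose (r + 1)) + (r - j) * (p + r).choose (r + 1)
        = (j + 1) * (p + r).choose r + (p + r).choose (r + 1) * (r - j + (j + 1)) := by ring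
      _ = (j + p + 1) * (p + r).choose r := by rw [hjr, hright]; ring
  · rw [Nat.choose_eq_zero_of_lt (by omega : q + r + 1 - j < r + 1),
      Nat.choose_eq_zero_of_lt (by omega : q + r - j < r + 1),
      Nat.choose_eq_zero_of_lt (by omega : q + r - j < r)]
    simp

def eulerian2ChooseSum (n m : ℕ) : ℕ :=
  ∑ j ∈ range (n + 1), eulerian2 n j * (m + 2 * n - j).choose (2 * n)

lemma eulerian2ChooseSum_zero_left (m : ℕ) : eulerian2ChooseSum 0 m = 1 := by
  simp [eulerian2ChooseSum, eulerian2]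

lemma eulerian2ChooseSum_zero_right (n : ℕ) : eulerian2ChooseSum n 0 = 1 := by
  rw [eulerian2ChooseSum, sum_eq_single 0 (fun j hj hj0 => ?_) (by simp)]
  · simp [eulerian2_zero_right]
  · rw [mem_range] at hj
    rw [Nat.choose_eq_zero_of_lt (by omega), mul_zero]

lemma eulerian2ChooseSum_succ_succ (n m : ℕ) :
    eulerian2ChooseSum (n + 1) (m + 1) =
      (m + 2) * eulerian2ChooseSum n (m + 1) + eulerian2ChooseSum (n + 1) m := by
  have hpascal : eulerian2ChooseSum (n + 1) (m + 1) =
      ∑ j ∈ range (n + 2), eulerian2 (n + 1) j * (m + 1 + 2 * n + 1 - j).choose (2 * n + 1) +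
        eulerian2ChooseSum (n + 1) m := by
    rw [eulerian2ChooseSum, eulerian2ChooseSum, ← sum_add_distrib]
    refine sum_congr rfl fun j hj => ?_
    rw [mem_range] at hj
    rw [show m + 1 + 2 * (n + 1) - j = (m + 2 * n + 2 - j) + 1 by omega,
      show m + 2 * (n + 1) - j = m + 2 * n + 2 - j by omega,
      show m + 1 + 2 * n + 1 - j = m + 2 * n + 2 - j by omega,
      show 2 * (n + 1) = 2 * n + 1 + 1 by ring, Nat.choose_succ_succ']
    ring
  rw [hpascal, sum_eulerian2_succ_mul]
  congr 1
  rw [eulerian2ChooseSum, mul_sum]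
  refine sum_congr rfl fun j hj => ?_
  rw [mem_range] at hj
  have h := choose_pascal_combination (q := m + 1) (r := 2 * n) (j := j) (by omega)
  rw [show m + 1 + 2 * n + 1 - (j + 1) = m + 1 + 2 * n - j by omega, h]
  ring

theorem stirling2_eq_eulerian2ChooseSum : ∀ n m : ℕ,
    stirling2 (n + m + 1) (m + 1) = eulerian2ChooseSum n m
  | 0, m => by rw [eulerian2ChooseSum_zero_left, zero_add, stirling2_self]
  | n + 1, 0 => by rw [eulerian2ChooseSum_zero_right, stirling2_succ_one]
  | n + 1, m + 1 => by
    rw [eulerian2ChooseSum_succ_succ, ← stirling2_eq_eulerian2ChooseSum n (m + 1),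
      ← stirling2_eq_eulerian2ChooseSum (n + 1) m,
      show n + 1 + (m + 1) + 1 = (n + m + 2) + 1 by ring, stirling2_succ_succ,
      show n + (m + 1) + 1 = n + m + 2 by ring, show n + 1 + m + 1 = n + m + 2 by ring]

lemma eulerian2ChooseSum_eq_sum_range (n m : ℕ) : eulerian2ChooseSum n m =
    ∑ j ∈ range (m + 1), eulerian2 n j * (2 * n + (m - j)).choose (2 * n) := by
  have hn : ∀ j ≥ n + 1, eulerian2 n j * (m + 2 * n - j).choose (2 * n) = 0 := fun j hj => by
    rw [eulerian2_eq_zero_of_lt hj, zero_mul]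
  have hm : ∀ j ≥ m + 1, eulerian2 n j * (m + 2 * n - j).choose (2 * n) = 0 := fun j hj =>
    (le_or_gt (n + 1) j).elim (hn j) fun hjn => by rw [Nat.choose_eq_zero_of_lt (by omega), mul_zero]
  rw [eulerian2ChooseSum, ← eventually_constant_sum hn (Nat.le_add_right (n + 1) m),
    show n + 1 + m = m + 1 + n by ring, eventually_constant_sum hm (Nat.le_add_right (m + 1) n)]
  refine sum_congr rfl fun j hj => ?_
  rw [mem_range] at hj
  rw [show m + 2 * n - j = 2 * n + (m - j) by omega]

open PowerSeries

lemma PowerSeries.coeff_one_sub_X_pow {R : Type*} [CommRing R] (r k : ℕ) :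
    coeff k ((1 - X : R⟦X⟧) ^ r) = (-1) ^ k * r.choose k := by
  have h : (1 - X : R⟦X⟧) ^ r = rescale (-1) (((1 + Polynomial.X) ^ r : Polynomial R) : R⟦X⟧) := by
    simp [sub_eq_add_neg]
  rw [h, coeff_rescale, Polynomial.coeff_coe, Polynomial.coeff_one_add_X_pow]

lemma mk_eulerian2_mul_mk_choose (n : ℕ) :
    (mk fun j => (eulerian2 n j : ℤ)) * mk (fun i => ((2 * n + i).choose (2 * n) : ℤ)) =
      mk fun m => (stirling2 (n + m + 1) (m + 1) : ℤ) := by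
  ext m
  rw [coeff_mul, Nat.sum_antidiagonal_eq_sum_range_succ_mk, coeff_mk,
    stirling2_eq_eulerian2ChooseSum, eulerian2ChooseSum_eq_sum_range]
  simp

lemma mk_eulerian2_eq (n : ℕ) :
    (mk fun j => (eulerian2 n j : ℤ)) =
      (1 - X) ^ (2 * n + 1) * mk fun m => (stirling2 (n + m + 1) (m + 1) : ℤ) := by
  rw [← mk_eulerian2_mul_mk_choose, mul_comm, mul_assoc, mk_add_choose_mul_one_sub_pow_eq_one,
    mul_one]

theorem eulerian2_stirling2_identity_general (n m : ℕ) :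
    (eulerian2 n m : ℤ) =
      ∑ k ∈ Finset.range (m + 1),
        ((2 * n + 1).choose k : ℤ) * (stirling2 (n + m + 1 - k) (m + 1 - k) : ℤ) *
          (-1 : ℤ) ^ k := by
  have h := congrArg (coeff m) (mk_eulerian2_eq n)
  rw [coeff_mk, coeff_mul, Nat.sum_antidiagonal_eq_sum_range_succ_mk] at h
  rw [h]
  refine sum_congr rfl fun k hk => ?_
  rw [mem_range] at hk
  rw [coeff_one_sub_X_pow, coeff_mk, show n + (m - k) + 1 = n + m + 1 - k by omega,
    show m - k + 1 = m + 1 - k by omega]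
  ring

theorem eulerian2_stirling2_identity (n m : ℕ) (h : m < n) :
    (eulerian2 n m : ℤ) =
      ∑ k ∈ Finset.range (m + 1),
        ((2 * n + 1).choose k : ℤ) * (stirling2 (n + m + 1 - k) (m + 1 - k) : ℤ) *
          (-1 : ℤ) ^ k :=
  eulerian2_stirling2_identity_general n m
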